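/- arXiv:2105.11230 — 3 statements merged into one kernel-verified Lean document; each statement's English description precedes it below -/
import Mathlib

section
/- Let ℓ ≥ 5 be a prime and r ≥ 1. If H is a subgroup of SL₂(ℤ/ℓʳℤ) whose image under the reduction map SL₂(ℤ/ℓʳℤ) → SL₂(ℤ/ℓℤ) is all of SL₂(ℤ/ℓℤ), then H = SL₂(ℤ/ℓʳℤ). -/
/-!
Induct on `r`. The kernel of `SL₂(ℤ/ℓ^{s+2}) → SL₂(ℤ/ℓ^{s+1})` consists of the matrices
`1 + ℓ^{s+1} S` with `ℓ^{s+1} tr S = 0`, and each of them is a product of three matrices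
`1 + ℓ^{s+1} N` with `tr N = det N = 0`, so `N² = 0`. Such a matrix lies in `H`: by induction `H`
surjects onto `SL₂(ℤ/ℓ^{s+1})`, so some `x ∈ H` lifts `1 + ℓ^s N`, i.e. `x = 1 + X` with
`X = ℓ^s (N + ℓ B)`. Then `ℓ X² = 0` and `X⁴ = 0`, so for `ℓ ≥ 5` the binomial expansion of
`(1 + X)^ℓ` collapses to `1 + ℓ X = 1 + ℓ^{s+1} N`. Hence `H` contains the kernel and surjects,
so it is everything.
-/

open Matrix
open scoped MatrixGroups

theorem Subgroup.eq_top_of_map_eq_top_of_ker_le {G K : Type*} [Group G] [Group K]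
    {f : G →* K} {H : Subgroup G} (hmap : H.map f = ⊤) (hker : f.ker ≤ H) : H = ⊤ := by
  rw [← comap_map_eq_self hker, hmap, comap_top]

open Finset in
theorem one_add_pow_prime_of_mul_sq_eq_zero {A : Type*} [Ring A] {p : ℕ} (hp : p.Prime)
    (hp4 : 4 ≤ p) {X : A} (hpX : (p : A) * X ^ 2 = 0) (hX : X ^ 4 = 0) :
    (1 + X) ^ p = 1 + p * X := by
  have hmiddle : ∀ k, 2 ≤ k → k < p → X ^ k * (p.choose k : A) = 0 := by
    intro k hk2 hkp
    obtain ⟨c, hc⟩ := hp.dvd_choose_self (by omega : k ≠ 0) hkp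
    obtain ⟨j, rfl⟩ := Nat.exists_eq_add_of_le hk2
    rw [hc, Nat.cast_mul, ← mul_assoc, ← (Nat.cast_commute p _).eq, pow_add, ← mul_assoc,
      hpX, zero_mul, zero_mul]
  rw [add_comm, (Commute.one_right X).add_pow,
    sum_eq_add_of_mem 0 1 (by simp) (by simp; omega) zero_ne_one]
  · simp [(Nat.cast_commute p X).eq]
  · intro k hk hk01
    rw [mem_range] at hk
    rw [one_pow, mul_one]
    rcases Nat.lt_or_ge k p with hkp | hkp
    · exact hmiddle k (by omega) hkp
    · rw [pow_eq_zero_of_le (by omega) hX, zero_mul]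

theorem one_add_smul_pow_prime {R A : Type*} [CommRing R] [Ring A] [Algebra R A] {p s : ℕ}
    (hp : p.Prime) (hp4 : 4 ≤ p) (hpR : (p : R) ^ (s + 2) = 0) {N : A} (hN : N * N = 0)
    (B : A) : (1 + (p : R) ^ s • (N + (p : R) • B)) ^ p = 1 + (p : R) ^ (s + 1) • N := by
  set q : R := (p : R)
  have hq : ∀ k, s + 2 ≤ k → q ^ k = 0 := fun k hk ↦ pow_eq_zero_of_le hk hpR
  have hpA : ∀ Y : A, (p : A) * Y = q • Y := fun Y ↦ by
    rw [← nsmul_eq_mul, Nat.cast_smul_eq_nsmul]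
  set D := N * B + B * N + q • (B * B)
  have hX2 : (q ^ s • (N + q • B)) ^ 2 = q ^ (2 * s + 1) • D := by
    simp only [D, sq, add_mul, mul_add, smul_mul_assoc, mul_smul_comm, hN, smul_add, smul_smul]
    module
  rw [one_add_pow_prime_of_mul_sq_eq_zero hp hp4 (X := q ^ s • (N + q • B))]
  · rw [hpA, smul_smul, smul_add, smul_smul, ← pow_succ', ← pow_succ, hq (s + 1 + 1) le_rfl,
      zero_smul, add_zero]
  · rw [hX2, hpA, smul_smul, ← pow_succ', hq _ (by omega), zero_smul]
  · rw [show 4 = 2 * 2 from rfl, pow_mul, hX2, smul_pow, ← pow_mul, hq _ (by omega), zero_smul]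

theorem ZMod.natCast_pow_self_eq_zero (p k : ℕ) : (p : ZMod (p ^ k)) ^ k = 0 := by
  exact_mod_cast ZMod.natCast_self (p ^ k)

theorem ZMod.exists_eq_natCast_mul_of_castHom_eq_zero {m d : ℕ} (h : m ∣ d) {x : ZMod d}
    (hx : ZMod.castHom h (ZMod m) x = 0) : ∃ y, x = m * y := by
  rw [← ZMod.intCast_zmod_cast x, map_intCast, ZMod.intCast_zmod_eq_zero_iff_dvd] at hx
  obtain ⟨k, hk⟩ := hx
  exact ⟨k, by rw [← ZMod.intCast_zmod_cast x, hk]; push_cast; rfl⟩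

theorem Matrix.exists_eq_add_smul_of_map_castHom_eq {ι κ : Type*} {m d : ℕ} (h : m ∣ d)
    {M N : Matrix ι κ (ZMod d)}
    (hMN : M.map (ZMod.castHom h (ZMod m)) = N.map (ZMod.castHom h (ZMod m))) :
    ∃ B, M = N + (m : ZMod d) • B := by
  have hentry : ∀ i j, ∃ b, M i j = N i j + m * b := fun i j ↦ by
    obtain ⟨b, hb⟩ := ZMod.exists_eq_natCast_mul_of_castHom_eq_zero h (x := M i j - N i j)
      (by rw [map_sub, sub_eq_zero]; exact congrFun₂ hMN i j)
    exact ⟨b, by rw [← hb, add_sub_cancel]⟩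
  choose B hB using hentry
  exact ⟨of B, by ext i j; simp [hB]⟩

section TwoByTwo

variable {R : Type*} [CommRing R]

theorem Matrix.det_one_add_smul_fin_two (c : R) (N : Matrix (Fin 2) (Fin 2) R) :
    (1 + c • N).det = 1 + c * N.trace + c ^ 2 * N.det := by
  simp only [det_fin_two, trace_fin_two, add_apply, smul_apply, smul_eq_mul, one_apply_eq,
    one_apply_ne, ne_eq, zero_ne_one, one_ne_zero, not_false_eq_true]
  ring

theorem Matrix.mul_self_eq_zero_of_trace_eq_zero_of_det_eq_zero {N : Matrix (Fin 2) (Fin 2) R}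
    (htr : N.trace = 0) (hdet : N.det = 0) : N * N = 0 := by
  rw [trace_fin_two] at htr
  rw [det_fin_two] at hdet
  ext i j
  fin_cases i <;> fin_cases j <;>
    simp only [Fin.zero_eta, Fin.mk_one, Fin.isValue, mul_apply, Fin.sum_univ_two, zero_apply]
  · linear_combination N 0 0 * htr - hdet
  · linear_combination N 0 1 * htr
  · linear_combination N 1 0 * htr
  · linear_combination N 1 1 * htr - hdet

theorem Matrix.one_add_smul_mul_one_add_smul {n : Type*} [Fintype n] [DecidableEq n] {c : R}
    (hc : c * c = 0) (X Y : Matrix n n R) : (1 + c • X) * (1 + c • Y) = 1 + c • (X + Y) := by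
  simp only [add_mul, mul_add, one_mul, mul_one, smul_mul_smul_comm, hc, zero_smul, smul_add]
  abel

theorem Matrix.one_add_smul_eq_mul_mul_fin_two {c : R} (hc : c * c = 0)
    {S : Matrix (Fin 2) (Fin 2) R} (hS : c * S.trace = 0) :
    1 + c • S = (1 + c • !![0, S 0 1 + S 0 0; 0, 0]) * (1 + c • !![0, 0; S 1 0 - S 0 0, 0]) *
      (1 + c • !![S 0 0, -S 0 0; S 0 0, -S 0 0]) := by
  rw [one_add_smul_mul_one_add_smul hc, one_add_smul_mul_one_add_smul hc]
  rw [trace_fin_two] at hS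
  ext i j
  fin_cases i <;> fin_cases j <;>
    simp only [Fin.zero_eta, Fin.mk_one, Fin.isValue, add_apply, one_apply_eq, one_apply_ne, ne_eq,
      zero_ne_one, one_ne_zero, not_false_eq_true, smul_apply, smul_eq_mul, of_add_of, add_cons,
      head_cons, tail_cons, empty_add_empty, add_zero, zero_add, add_neg_cancel_right,
      sub_add_cancel, smul_of, smul_cons, smul_empty, mul_neg, of_apply, cons_val', cons_val_zero,
      cons_val_one, cons_val_fin_one, add_right_inj]
  linear_combination hS

end TwoByTwo

def reduceMod {m d : ℕ} (h : m ∣ d) : SL(2, ZMod d) →* SL(2, ZMod m) :=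
  Matrix.SpecialLinearGroup.map (ZMod.castHom h (ZMod m))

theorem exists_coe_eq_one_add_smul_of_mem_ker_reduceMod {m d : ℕ} (h : m ∣ d)
    {g : SL(2, ZMod d)} (hg : g ∈ (reduceMod h).ker) :
    ∃ B, (g : Matrix (Fin 2) (Fin 2) (ZMod d)) = 1 + (m : ZMod d) • B :=
  exists_eq_add_smul_of_map_castHom_eq h
    (by rw [Matrix.map_one _ (map_zero _) (map_one _)]; exact congrArg Subtype.val hg)

theorem reduceMod_comp_reduceMod {m d e : ℕ} (hm : m ∣ d) (hd : d ∣ e) :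
    (reduceMod hm).comp (reduceMod hd) = reduceMod (hm.trans hd) := by
  ext g i j
  exact RingHom.congr_fun (ZMod.castHom_comp hm hd) _

section Lift

variable {ℓ s : ℕ} (hℓ : ℓ.Prime) (h5 : 5 ≤ ℓ)
  {H : Subgroup (SL(2, ZMod (ℓ ^ (s + 2))))}
  (hH : H.map (reduceMod (pow_dvd_pow ℓ (by omega : s + 1 ≤ s + 2))) = ⊤)
include hℓ h5 hH

theorem exists_mem_coe_eq_one_add_smul {N : Matrix (Fin 2) (Fin 2) (ZMod (ℓ ^ (s + 2)))}
    (htr : N.trace = 0) (hdet : N.det = 0) :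
    ∃ g ∈ H, (g : Matrix (Fin 2) (Fin 2) (ZMod (ℓ ^ (s + 2)))) =
      1 + (ℓ : ZMod (ℓ ^ (s + 2))) ^ (s + 1) • N := by
  let E : SL(2, ZMod (ℓ ^ (s + 2))) :=
    ⟨1 + (ℓ : ZMod (ℓ ^ (s + 2))) ^ s • N, by rw [det_one_add_smul_fin_two, htr, hdet]; ring⟩
  obtain ⟨x, hx, hxE⟩ : reduceMod _ E ∈ H.map (reduceMod _) := hH ▸ Subgroup.mem_top _
  obtain ⟨B, hB⟩ := exists_eq_add_smul_of_map_castHom_eq _ (congrArg Subtype.val hxE)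
  refine ⟨x ^ ℓ, pow_mem hx ℓ, ?_⟩
  rw [Matrix.SpecialLinearGroup.coe_pow, hB, ← one_add_smul_pow_prime hℓ (by omega)
    (ZMod.natCast_pow_self_eq_zero ℓ _)
    (mul_self_eq_zero_of_trace_eq_zero_of_det_eq_zero htr hdet) B]
  push_cast
  congr 1
  module

theorem ker_reduceMod_le : (reduceMod (pow_dvd_pow ℓ (by omega : s + 1 ≤ s + 2))).ker ≤ H := by
  intro g hg
  set c : ZMod (ℓ ^ (s + 2)) := (ℓ : ZMod (ℓ ^ (s + 2))) ^ (s + 1)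
  obtain ⟨S, hS⟩ := exists_coe_eq_one_add_smul_of_mem_ker_reduceMod _ hg
  push_cast at hS
  have hc : c * c = 0 := by
    rw [← pow_add]
    exact pow_eq_zero_of_le (by omega) (ZMod.natCast_pow_self_eq_zero ℓ (s + 2))
  have htr : c * S.trace = 0 := by
    have hdet := g.prop
    rw [hS, det_one_add_smul_fin_two, sq, hc] at hdet
    linear_combination hdet
  obtain ⟨g₁, hg₁, e₁⟩ := exists_mem_coe_eq_one_add_smul hℓ h5 hH
    (N := !![0, S 0 1 + S 0 0; 0, 0]) (by simp [trace_fin_two]) (by simp [det_fin_two])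
  obtain ⟨g₂, hg₂, e₂⟩ := exists_mem_coe_eq_one_add_smul hℓ h5 hH
    (N := !![0, 0; S 1 0 - S 0 0, 0]) (by simp [trace_fin_two]) (by simp [det_fin_two])
  obtain ⟨g₃, hg₃, e₃⟩ := exists_mem_coe_eq_one_add_smul hℓ h5 hH
    (N := !![S 0 0, -S 0 0; S 0 0, -S 0 0]) (by simp [trace_fin_two]) (by simp [det_fin_two])
  have hprod : g = g₁ * g₂ * g₃ := by
    ext1
    rw [Matrix.SpecialLinearGroup.coe_mul, Matrix.SpecialLinearGroup.coe_mul, e₁, e₂, e₃, hS,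
      one_add_smul_eq_mul_mul_fin_two hc htr]
  exact hprod ▸ mul_mem (mul_mem hg₁ hg₂) hg₃

end Lift

theorem eq_top_of_map_reduceMod_eq_top {ℓ : ℕ} (hℓ : ℓ.Prime) (h5 : 5 ≤ ℓ) (r : ℕ)
    (hd : ℓ ∣ ℓ ^ (r + 1)) (H : Subgroup SL(2, ZMod (ℓ ^ (r + 1))))
    (hH : H.map (reduceMod hd) = ⊤) : H = ⊤ := by
  induction r with
  | zero =>
    refine H.eq_top_of_map_eq_top_of_ker_le hH fun g hg ↦ ?_
    obtain ⟨B, hB⟩ := exists_coe_eq_one_add_smul_of_mem_ker_reduceMod hd hg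
    have hℓ0 : (ℓ : ZMod (ℓ ^ (0 + 1))) = 0 := by
      rw [ZMod.natCast_eq_zero_iff, zero_add, pow_one]
    have hg1 : g = 1 := Subtype.ext (by rw [hB, hℓ0, zero_smul, add_zero]; rfl)
    exact hg1 ▸ H.one_mem
  | succ r ih =>
    have hmap : (H.map (reduceMod (pow_dvd_pow ℓ (by omega : r + 1 ≤ r + 2)))).map
        (reduceMod (dvd_pow_self ℓ r.succ_ne_zero)) = ⊤ := by
      rwa [Subgroup.map_map, reduceMod_comp_reduceMod]
    have hsurj := ih _ _ hmap
    exact H.eq_top_of_map_eq_top_of_ker_le hsurj (ker_reduceMod_le hℓ h5 hsurj)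

/-- Serre's lifting lemma: a subgroup of `SL₂(ℤ/ℓʳℤ)` surjecting onto
`SL₂(ℤ/ℓℤ)` under reduction mod `ℓ` is everything. -/
theorem stmt_3 (ℓ r : ℕ) (hℓ : ℓ.Prime) (h5 : 5 ≤ ℓ) (hr : 1 ≤ r)
    (H : Subgroup (Matrix.SpecialLinearGroup (Fin 2) (ZMod (ℓ ^ r))))
    (hsurj : Subgroup.map
      (Matrix.SpecialLinearGroup.map
        (ZMod.castHom (dvd_pow_self ℓ (Nat.one_le_iff_ne_zero.mp hr)) (ZMod ℓ))) H = ⊤) :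
    H = ⊤ := by
  obtain ⟨r, rfl⟩ := Nat.exists_eq_add_of_le' hr
  exact eq_top_of_map_reduceMod_eq_top hℓ h5 r _ H hsurj
end

section
/- Let ℓ be a prime and g > 1. If H is a subgroup of Sp_{2g}(ℤ/ℓℤ) such that {±h : h ∈ H} = Sp_{2g}(ℤ/ℓℤ), then H = Sp_{2g}(ℤ/ℓℤ). -/
open Matrix

namespace Matrix.symplecticGroup

variable {l R : Type*} [DecidableEq l] [Fintype l] [CommRing R]
  {H : Subgroup (symplecticGroup l R)}

/-- Whichever of `J` and `-J` lies in `H`, its square is `-1`. -/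
theorem exists_mem_coe_eq_neg_one_of_forall_mem_or_neg_mem
    (hpm : ∀ x : symplecticGroup l R,
      x ∈ H ∨ ∃ y ∈ H, (y : Matrix (l ⊕ l) (l ⊕ l) R) = -(x : Matrix (l ⊕ l) (l ⊕ l) R)) :
    ∃ m ∈ H, (m : Matrix (l ⊕ l) (l ⊕ l) R) = -1 := by
  rcases hpm ⟨J l R, SymplecticGroup.J_mem l R⟩ with hJ | ⟨y, hy, hyJ⟩
  · exact ⟨_, mul_mem hJ hJ, J_squared l R⟩
  · refine ⟨y * y, mul_mem hy hy, ?_⟩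
    rw [Submonoid.coe_mul, hyJ, neg_mul_neg, J_squared]

theorem eq_top_of_forall_mem_or_neg_mem
    (hpm : ∀ x : symplecticGroup l R,
      x ∈ H ∨ ∃ y ∈ H, (y : Matrix (l ⊕ l) (l ⊕ l) R) = -(x : Matrix (l ⊕ l) (l ⊕ l) R)) :
    H = ⊤ := by
  obtain ⟨m, hm, hm_neg_one⟩ := exists_mem_coe_eq_neg_one_of_forall_mem_or_neg_mem hpm
  refine eq_top_iff.mpr fun x _ => ?_
  rcases hpm x with hx | ⟨y, hy, hyx⟩
  · exact hx
  · have hmy : m * y = x := by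
      ext1
      rw [Submonoid.coe_mul, hm_neg_one, hyx, neg_one_mul, neg_neg]
    exact hmy ▸ mul_mem hm hy

end Matrix.symplecticGroup

theorem stmt_12_general (g ℓ : ℕ)
    (H : Subgroup ↥(Matrix.symplecticGroup (Fin g) (ZMod ℓ)))
    (hpm : ∀ x : ↥(Matrix.symplecticGroup (Fin g) (ZMod ℓ)),
      x ∈ H ∨ ∃ y ∈ H, (y : Matrix (Fin g ⊕ Fin g) (Fin g ⊕ Fin g) (ZMod ℓ)) =
        -(x : Matrix (Fin g ⊕ Fin g) (Fin g ⊕ Fin g) (ZMod ℓ))) :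
    H = ⊤ :=
  Matrix.symplecticGroup.eq_top_of_forall_mem_or_neg_mem hpm

/-- If `H ≤ Sp_{2g}(ℤ/ℓℤ)` (`ℓ` prime, `g > 1`) satisfies `±H = Sp_{2g}(ℤ/ℓℤ)`,
then `H = Sp_{2g}(ℤ/ℓℤ)`. -/
theorem stmt_12 (g ℓ : ℕ) (hℓ : ℓ.Prime) (hg : 1 < g)
    (H : Subgroup ↥(Matrix.symplecticGroup (Fin g) (ZMod ℓ)))
    (hpm : ∀ x : ↥(Matrix.symplecticGroup (Fin g) (ZMod ℓ)),
      x ∈ H ∨ ∃ y ∈ H, (y : Matrix (Fin g ⊕ Fin g) (Fin g ⊕ Fin g) (ZMod ℓ)) =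
        -(x : Matrix (Fin g ⊕ Fin g) (Fin g ⊕ Fin g) (ZMod ℓ))) :
    H = ⊤ :=
  stmt_12_general g ℓ H hpm
end

section
/- Let p ≥ 5 be prime, r ≥ 1, and let G = Sp_{2g}(ℤ/pʳℤ). If H is a subgroup of G whose image under reduction mod p is all of Sp_{2g}(ℤ/pℤ), then H = Sp_{2g}(ℤ/pʳℤ). -/
open Matrix Finset

/-- The image of `J` under a ring hom is `J`. -/
theorem J_map {g : ℕ} {R S : Type} [CommRing R] [CommRing S] (f : R →+* S) :
    (Matrix.J (Fin g) R).map f = Matrix.J (Fin g) S := by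
  simp [Matrix.J, Matrix.fromBlocks_map, Matrix.map_zero _ f.map_zero,
    Matrix.map_one _ f.map_zero f.map_one]
  ext i j
  simp [Matrix.map_apply, Matrix.one_apply, apply_ite f]

/-- Reduction homomorphism on symplectic groups induced by a ring hom. -/
def redSp (g : ℕ) {R S : Type} [CommRing R] [CommRing S] (f : R →+* S) :
    ↥(Matrix.symplecticGroup (Fin g) R) →* ↥(Matrix.symplecticGroup (Fin g) S) where
  toFun A := ⟨(A : Matrix (Fin g ⊕ Fin g) (Fin g ⊕ Fin g) R).map f, by
    have hA := A.2
    rw [SymplecticGroup.mem_iff] at hA ⊢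
    have h2 : ((A : Matrix (Fin g ⊕ Fin g) (Fin g ⊕ Fin g) R) * Matrix.J (Fin g) R *
        (A : Matrix (Fin g ⊕ Fin g) (Fin g ⊕ Fin g) R)ᵀ).map f = (Matrix.J (Fin g) R).map f := by
      rw [hA]
    rwa [Matrix.map_mul, Matrix.map_mul, Matrix.transpose_map, J_map] at h2⟩
  map_one' := Subtype.ext (Matrix.map_one _ f.map_zero f.map_one)
  map_mul' x y := Subtype.ext (Matrix.map_mul)

variable {S : Type} [CommRing S] {n : Type} [Fintype n] [DecidableEq n]

/-- product of two `1 + ε•A` elements. -/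
lemma one_add_smul_mul {ε : S} (hε : ε * ε = 0) (A B : Matrix n n S) :
    (1 + ε • A) * (1 + ε • B) = 1 + ε • (A + B) := by
  have h : (ε • A) * (ε • B) = (ε * ε) • (A * B) := by
    rw [smul_mul_assoc, mul_smul_comm, smul_smul]
  rw [mul_add, add_mul, add_mul, mul_one, mul_one, one_mul, h, hε, zero_smul, add_zero, smul_add]
  abel

lemma bin {p : ℕ} (hp : p.Prime) (h5 : 5 ≤ p) {ε : S} (hε : ε * ε = 0)
    (hpε : (p : S) * ε = 0) (D E : Matrix n n S) (hD : D * D = ε • E) :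
    (1 + D) ^ p = 1 + p • D := by
  have hsq : D ^ 2 = ε • E := by rw [sq]; exact hD
  have hz : ∀ k ∈ range (p + 1), k ∉ range 2 → D ^ k * (p.choose k : Matrix n n S) = 0 := by
    intro k hk hk2
    simp only [mem_range, not_lt] at hk hk2
    have hkp : k ≤ p := by omega
    rcases eq_or_lt_of_le hkp with heq | hlt
    · -- k = p
      subst heq
      have h4 : D ^ k = ((ε * ε) • (E * E)) * D ^ (k - 4) := by
        have h2 : D ^ k = D ^ 2 * D ^ 2 * D ^ (k - 4) := by
          rw [← pow_add, ← pow_add]; congr 1; omega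
        rw [h2, hsq, smul_mul_smul_comm]
      rw [h4, hε, zero_smul, zero_mul, zero_mul]
    · -- 2 ≤ k < p
      obtain ⟨c, hc⟩ := (Nat.Prime.dvd_choose_self hp (by omega) hlt)
      have hDk : D ^ k = ε • (D ^ (k - 2) * E) := by
        have : D ^ k = D ^ (k - 2) * D ^ 2 := by rw [← pow_add]; congr 1; omega
        rw [this, hsq, mul_smul_comm]
      rw [hDk, hc]
      have : (ε • (D ^ (k - 2) * E)) * ((p * c : ℕ) : Matrix n n S)
          = ((p * c : ℕ) : Matrix n n S) * (ε • (D ^ (k - 2) * E)) :=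
        (Nat.cast_commute _ _).eq.symm
      rw [this, ← nsmul_eq_mul, mul_comm p c, mul_smul,
        ← Nat.cast_smul_eq_nsmul S p (ε • (D ^ (k - 2) * E)), smul_smul, hpε, zero_smul,
        smul_zero]
  have hcp : (1 + D) ^ p = ∑ k ∈ range (p + 1), D ^ k * (p.choose k : Matrix n n S) := by
    rw [add_comm]
    have := (Commute.one_right D).add_pow p
    simpa [one_pow] using this
  rw [hcp, ← Finset.sum_subset (by intro x hx; simp at hx ⊢; omega : range 2 ⊆ range (p + 1)) hz]
  rw [Finset.sum_range_succ, Finset.sum_range_one]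
  simp [nsmul_eq_mul, (Nat.cast_commute (p : ℕ) D).eq]

section Helpers

variable {l : Type} [DecidableEq l] [Fintype l]

lemma sp_expand (c : S) (A : Matrix (l ⊕ l) (l ⊕ l) S) :
    (1 + c • A) * J l S * (1 + c • A)ᵀ
      = J l S + c • (A * J l S + J l S * Aᵀ) + (c * c) • (A * J l S * Aᵀ) := by
  simp only [transpose_add, transpose_one, transpose_smul, mul_add, add_mul, one_mul, mul_one,
    smul_mul_assoc, mul_smul_comm, smul_smul, smul_add]
  abel

lemma one_add_smul_mem {ε : S} (hε : ε * ε = 0) (A : Matrix (l ⊕ l) (l ⊕ l) S) :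
    (1 + ε • A) ∈ symplecticGroup l S ↔ ε • (A * J l S + J l S * Aᵀ) = 0 := by
  rw [SymplecticGroup.mem_iff, sp_expand, hε, zero_smul, add_zero, add_eq_left]

end Helpers

section ZModHelp

variable {N M : ℕ} [NeZero N] (h : M ∣ N)

lemma cast_eq_zero_imp (s : ZMod N) (hs : ZMod.castHom h (ZMod M) s = 0) :
    ∃ t : ZMod N, s = (M : ZMod N) * t := by
  have h1 : ((s.val : ℕ) : ZMod M) = 0 := by
    rwa [ZMod.natCast_val, ← ZMod.castHom_apply (h := h)]
  obtain ⟨t, ht⟩ := (ZMod.natCast_eq_zero_iff _ _).mp h1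
  refine ⟨(t : ZMod N), ?_⟩
  have h2 : ((s.val : ℕ) : ZMod N) = s := by rw [ZMod.natCast_val, ZMod.cast_id]
  rw [← h2, ht, Nat.cast_mul]

variable {m' : Type} [Fintype m'] [DecidableEq m']

lemma map_eq_one_extract (X : Matrix m' m' (ZMod N))
    (hX : X.map (ZMod.castHom h (ZMod M)) = 1) :
    ∃ A : Matrix m' m' (ZMod N), X = 1 + (M : ZMod N) • A := by
  have he : ∀ i j, ∃ t, X i j - (1 : Matrix m' m' (ZMod N)) i j = (M : ZMod N) * t := by
    intro i j
    apply cast_eq_zero_imp h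
    have h0 : (X.map (ZMod.castHom h (ZMod M))) i j
        - ((1 : Matrix m' m' (ZMod N)).map (ZMod.castHom h (ZMod M))) i j = 0 := by
      rw [hX, Matrix.map_one _ (map_zero _) (map_one _), sub_self]
    rw [map_sub]
    simpa [Matrix.map_apply] using h0
  choose A hA using he
  refine ⟨Matrix.of A, ?_⟩
  ext i j
  have := hA i j
  simp only [Matrix.add_apply, Matrix.smul_apply, Matrix.of_apply, smul_eq_mul]
  linear_combination this

lemma smul_map_zero (c : ZMod N) (hc : c * (M : ZMod N) = 0) (X : Matrix m' m' (ZMod N))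
    (hX : X.map (ZMod.castHom h (ZMod M)) = 0) : c • X = 0 := by
  ext i j
  have h0 : ZMod.castHom h (ZMod M) (X i j) = 0 := by
    have := congrFun (congrFun hX i) j
    simpa [Matrix.map_apply] using this
  obtain ⟨t, ht⟩ := cast_eq_zero_imp h _ h0
  simp only [Matrix.smul_apply, smul_eq_mul, Matrix.zero_apply, ht, ← mul_assoc, hc, zero_mul]

end ZModHelp

/-- `M` is the underlying matrix of some element of `H`. -/
def InH {R : Type} [CommRing R] {g : ℕ} (H : Subgroup ↥(Matrix.symplecticGroup (Fin g) R))
    (M : Matrix (Fin g ⊕ Fin g) (Fin g ⊕ Fin g) R) : Prop :=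
  ∃ x, x ∈ H ∧ (x : Matrix (Fin g ⊕ Fin g) (Fin g ⊕ Fin g) R) = M

lemma InH.mul {R : Type} [CommRing R] {g : ℕ}
    {H : Subgroup ↥(Matrix.symplecticGroup (Fin g) R)} {M N : Matrix _ _ R}
    (hM : InH H M) (hN : InH H N) : InH H (M * N) := by
  obtain ⟨x, hx, hxv⟩ := hM
  obtain ⟨y, hy, hyv⟩ := hN
  exact ⟨x * y, mul_mem hx hy, by rw [Submonoid.coe_mul, hxv, hyv]⟩

lemma InH.one {R : Type} [CommRing R] {g : ℕ}
    {H : Subgroup ↥(Matrix.symplecticGroup (Fin g) R)} : InH H 1 :=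
  ⟨1, one_mem H, rfl⟩

section Generic

variable {g p : ℕ} {S R1 R2 : Type} [CommRing S] [CommRing R1] [CommRing R2]

lemma map_eq_one_extract' (f1 : S →+* R1) (ε : S) (hker : ∀ s, f1 s = 0 → ∃ t, s = ε * t)
    {m' : Type} [Fintype m'] [DecidableEq m'] (X : Matrix m' m' S) (hX : X.map f1 = 1) :
    ∃ A : Matrix m' m' S, X = 1 + ε • A := by
  have he : ∀ i j, ∃ t, X i j - (1 : Matrix m' m' S) i j = ε * t := by
    intro i j
    apply hker
    have h0 : (X.map f1) i j - ((1 : Matrix m' m' S).map f1) i j = 0 := by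
      rw [hX, Matrix.map_one _ (map_zero _) (map_one _), sub_self]
    rw [map_sub]
    simpa [Matrix.map_apply] using h0
  choose A hA using he
  refine ⟨Matrix.of A, ?_⟩
  ext i j
  have := hA i j
  simp only [Matrix.add_apply, Matrix.smul_apply, Matrix.of_apply, smul_eq_mul]
  linear_combination this

lemma smul_map_zero' (f : S →+* R2) (c : S) (hker2 : ∀ s, f s = 0 → c * s = 0)
    {m' : Type} (X : Matrix m' m' S) (hX : X.map f = 0) : c • X = 0 := by
  ext i j
  have h0 : f (X i j) = 0 := by
    have := congrFun (congrFun hX i) j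
    simpa [Matrix.map_apply] using this
  simpa [Matrix.smul_apply] using hker2 _ h0

lemma gen1 (hp : p.Prime) (h5 : 5 ≤ p) (ε m : S) (hεε : ε * ε = 0) (hpε : (p : S) * ε = 0)
    (hpm : (p : S) * m = ε) (f1 : S →+* R1) (hker : ∀ s, f1 s = 0 → ∃ t, s = ε * t)
    (H : Subgroup ↥(Matrix.symplecticGroup (Fin g) S))
    (hH1 : Subgroup.map (redSp g f1) H = ⊤)
    (G : Matrix (Fin g ⊕ Fin g) (Fin g ⊕ Fin g) S)
    (hGJ : G * J (Fin g) S + J (Fin g) S * Gᵀ = 0)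
    (hGJG : G * J (Fin g) S * Gᵀ = 0) (hG2 : G * G = 0) :
    InH H (1 + ε • G) := by
  have hy : (1 + m • G) ∈ symplecticGroup (Fin g) S := by
    rw [SymplecticGroup.mem_iff, sp_expand, hGJ, hGJG, smul_zero, smul_zero, add_zero, add_zero]
  set y : ↥(symplecticGroup (Fin g) S) := ⟨1 + m • G, hy⟩ with hy_def
  have hmem : redSp g f1 y ∈ Subgroup.map (redSp g f1) H := by rw [hH1]; trivial
  obtain ⟨h, hhH, hred⟩ := hmem
  have hkmap : (↑(y⁻¹ * h) : Matrix (Fin g ⊕ Fin g) (Fin g ⊕ Fin g) S).map f1 = 1 := by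
    have h1 : redSp g f1 (y⁻¹ * h) = 1 := by rw [_root_.map_mul, map_inv, hred, inv_mul_cancel]
    exact congrArg Subtype.val h1
  obtain ⟨C, hC⟩ := map_eq_one_extract' f1 ε hker _ hkmap
  set F := C + m • (G * C) with hF
  have hval : (↑h : Matrix (Fin g ⊕ Fin g) (Fin g ⊕ Fin g) S) = (1 + m • G) * (1 + ε • C) := by
    have h2 : y * (y⁻¹ * h) = h := by rw [← mul_assoc, mul_inv_cancel, one_mul]
    calc (↑h : Matrix (Fin g ⊕ Fin g) (Fin g ⊕ Fin g) S)
        = (↑(y * (y⁻¹ * h)) : Matrix (Fin g ⊕ Fin g) (Fin g ⊕ Fin g) S) := by rw [h2]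
    _ = (1 + m • G) * (1 + ε • C) := by rw [Submonoid.coe_mul, hC]
  have hhD : (↑h : Matrix (Fin g ⊕ Fin g) (Fin g ⊕ Fin g) S) = 1 + (m • G + ε • F) := by
    have h1 : (m • G) * (ε • C) = ε • (m • (G * C)) := by
      rw [smul_mul_assoc, mul_smul_comm, smul_smul, smul_smul, mul_comm m ε]
    rw [hval, mul_add, add_mul, add_mul, mul_one, mul_one, one_mul, h1, hF, smul_add]
    abel
  have hD2 : (m • G + ε • F) * (m • G + ε • F) = ε • (m • (G * F) + m • (F * G)) := by
    have e1 : (m • G) * (m • G) = (m * m) • (G * G) := by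
      rw [smul_mul_assoc, mul_smul_comm, smul_smul]
    have e2 : (m • G) * (ε • F) = ε • (m • (G * F)) := by
      rw [smul_mul_assoc, mul_smul_comm, smul_smul, smul_smul, mul_comm m ε]
    have e3 : (ε • F) * (m • G) = ε • (m • (F * G)) := by
      rw [smul_mul_assoc, mul_smul_comm, smul_smul, ← smul_smul]
    have e4 : (ε • F) * (ε • F) = (ε * ε) • (F * F) := by
      rw [smul_mul_assoc, mul_smul_comm, smul_smul]
    rw [mul_add, add_mul, add_mul, e1, e2, e3, e4, hG2, hεε, smul_zero, zero_smul, smul_add]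
    abel
  have hpow := bin hp h5 hεε hpε _ _ hD2
  refine ⟨h ^ p, pow_mem hhH p, ?_⟩
  have hcoe : (↑(h ^ p) : Matrix (Fin g ⊕ Fin g) (Fin g ⊕ Fin g) S)
      = (↑h : Matrix (Fin g ⊕ Fin g) (Fin g ⊕ Fin g) S) ^ p := SubmonoidClass.coe_pow _ _
  rw [hcoe, hhD, hpow]
  congr 1
  rw [smul_add, ← Nat.cast_smul_eq_nsmul S, ← Nat.cast_smul_eq_nsmul S, smul_smul, smul_smul,
    hpm, hpε, zero_smul, add_zero]

lemma conj_smul (ε : S) (f : S →+* R2) (hker2 : ∀ s, f s = 0 → ε * s = 0)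
    (H : Subgroup ↥(Matrix.symplecticGroup (Fin g) S))
    (hsurj : Subgroup.map (redSp g f) H = ⊤)
    (s s' : Matrix (Fin g ⊕ Fin g) (Fin g ⊕ Fin g) S) (hs : s ∈ symplecticGroup (Fin g) S)
    (hss' : s * s' = 1) (A : Matrix (Fin g ⊕ Fin g) (Fin g ⊕ Fin g) S)
    (hA : InH H (1 + ε • A)) : InH H (1 + ε • (s * A * s')) := by
  obtain ⟨x, hxH, hx⟩ := hA
  have hmem : redSp g f ⟨s, hs⟩ ∈ Subgroup.map (redSp g f) H := by rw [hsurj]; trivial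
  obtain ⟨h, hhH, hred⟩ := hmem
  refine ⟨h * x * h⁻¹, mul_mem (mul_mem hhH hxH) (inv_mem hhH), ?_⟩
  have hmapf : (↑h : Matrix (Fin g ⊕ Fin g) (Fin g ⊕ Fin g) S).map f = s.map f :=
    congrArg Subtype.val hred
  have hmapf' : (↑(h⁻¹) : Matrix (Fin g ⊕ Fin g) (Fin g ⊕ Fin g) S).map f = s'.map f := by
    have hV : (↑(h⁻¹) : Matrix (Fin g ⊕ Fin g) (Fin g ⊕ Fin g) S).map f *
        (↑h : Matrix (Fin g ⊕ Fin g) (Fin g ⊕ Fin g) S).map f = 1 := by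
      rw [← Matrix.map_mul, ← Submonoid.coe_mul, inv_mul_cancel, OneMemClass.coe_one,
        Matrix.map_one _ (map_zero f) (map_one f)]
    rw [hmapf] at hV
    have hsf : s.map f * s'.map f = 1 := by
      rw [← Matrix.map_mul, hss', Matrix.map_one _ (map_zero f) (map_one f)]
    calc (↑(h⁻¹) : Matrix (Fin g ⊕ Fin g) (Fin g ⊕ Fin g) S).map f
        = (↑(h⁻¹) : Matrix (Fin g ⊕ Fin g) (Fin g ⊕ Fin g) S).map f *
          (s.map f * s'.map f) := by rw [hsf, mul_one]
      _ = ((↑(h⁻¹) : Matrix (Fin g ⊕ Fin g) (Fin g ⊕ Fin g) S).map f * s.map f) * s'.map f := by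
          rw [mul_assoc]
      _ = s'.map f := by rw [hV, one_mul]
  have hinv : (↑h : Matrix (Fin g ⊕ Fin g) (Fin g ⊕ Fin g) S) *
      (↑(h⁻¹) : Matrix (Fin g ⊕ Fin g) (Fin g ⊕ Fin g) S) = 1 := by
    rw [← Submonoid.coe_mul, mul_inv_cancel, OneMemClass.coe_one]
  have expand : (↑(h * x * h⁻¹) : Matrix (Fin g ⊕ Fin g) (Fin g ⊕ Fin g) S)
      = 1 + ε • ((↑h : Matrix (Fin g ⊕ Fin g) (Fin g ⊕ Fin g) S) * A *
        (↑(h⁻¹) : Matrix (Fin g ⊕ Fin g) (Fin g ⊕ Fin g) S)) := by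
    rw [Submonoid.coe_mul, Submonoid.coe_mul, hx, mul_add, mul_one, add_mul, hinv,
      mul_smul_comm, smul_mul_assoc, mul_assoc]
  rw [expand]
  congr 1
  have hz : (((↑h : Matrix (Fin g ⊕ Fin g) (Fin g ⊕ Fin g) S) * A *
      (↑(h⁻¹) : Matrix (Fin g ⊕ Fin g) (Fin g ⊕ Fin g) S)) - s * A * s').map f = 0 := by
    rw [Matrix.map_sub _ (map_sub f), Matrix.map_mul, Matrix.map_mul, Matrix.map_mul,
      Matrix.map_mul, hmapf, hmapf', sub_self]
  have hzz := smul_map_zero' f ε hker2 _ hz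
  rw [smul_sub, sub_eq_zero] at hzz
  exact hzz

end Generic

section Concrete

variable {g p r : ℕ}

lemma std_transpose {n' : Type} [DecidableEq n'] {R : Type} [CommRing R] (i j : n') (c : R) :
    (Matrix.single i j c)ᵀ = Matrix.single j i c := by
  ext a b
  simp [Matrix.single, Matrix.transpose_apply, and_comm]

lemma eps_mul_eps (hr : 1 ≤ r) :
    ((p ^ r : ℕ) : ZMod (p ^ (r + 1))) * ((p ^ r : ℕ) : ZMod (p ^ (r + 1))) = 0 := by
  rw [← Nat.cast_mul, ← pow_add, ZMod.natCast_eq_zero_iff]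
  exact pow_dvd_pow p (by omega)

lemma p_mul_eps : (p : ZMod (p ^ (r + 1))) * ((p ^ r : ℕ) : ZMod (p ^ (r + 1))) = 0 := by
  rw [← Nat.cast_mul, ← pow_succ']
  exact ZMod.natCast_self _

lemma p_mul_m (hr : 1 ≤ r) :
    (p : ZMod (p ^ (r + 1))) * ((p ^ (r - 1) : ℕ) : ZMod (p ^ (r + 1)))
      = ((p ^ r : ℕ) : ZMod (p ^ (r + 1))) := by
  rw [← Nat.cast_mul]
  congr 1
  rw [← pow_succ']
  congr 1
  omega

lemma hker1 (hp0 : p ≠ 0) :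
    ∀ s : ZMod (p ^ (r + 1)),
      ZMod.castHom (pow_dvd_pow p (Nat.le_succ r)) (ZMod (p ^ r)) s = 0 →
      ∃ t, s = ((p ^ r : ℕ) : ZMod (p ^ (r + 1))) * t := by
  haveI : NeZero (p ^ (r + 1)) := ⟨pow_ne_zero _ hp0⟩
  intro s hs
  exact cast_eq_zero_imp _ s hs

lemma hker2 (hp0 : p ≠ 0) (hd : p ∣ p ^ (r + 1)) :
    ∀ s : ZMod (p ^ (r + 1)), ZMod.castHom hd (ZMod p) s = 0 →
      ((p ^ r : ℕ) : ZMod (p ^ (r + 1))) * s = 0 := by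
  haveI : NeZero (p ^ (r + 1)) := ⟨pow_ne_zero _ hp0⟩
  intro s hs
  obtain ⟨t, ht⟩ := cast_eq_zero_imp hd s hs
  rw [ht, ← mul_assoc, ← Nat.cast_mul, ← pow_succ, ZMod.natCast_self, zero_mul]

lemma genUpper (hp : p.Prime) (h5 : 5 ≤ p) (hr : 1 ≤ r)
    (H : Subgroup ↥(Matrix.symplecticGroup (Fin g) (ZMod (p ^ (r + 1)))))
    (hH1 : Subgroup.map
      (redSp g (ZMod.castHom (pow_dvd_pow p (Nat.le_succ r)) (ZMod (p ^ r)))) H = ⊤)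
    (Y : Matrix (Fin g) (Fin g) (ZMod (p ^ (r + 1)))) (hY : Yᵀ = Y) :
    InH H (1 + ((p ^ r : ℕ) : ZMod (p ^ (r + 1))) • fromBlocks 0 Y 0 0) := by
  apply gen1 hp h5 _ ((p ^ (r - 1) : ℕ) : ZMod (p ^ (r + 1))) (eps_mul_eps hr) p_mul_eps
    (p_mul_m hr) _ (hker1 hp.pos.ne') H hH1
  · show fromBlocks 0 Y 0 0 * J (Fin g) _ + J (Fin g) _ * (fromBlocks 0 Y 0 0)ᵀ = 0
    simp only [Matrix.J, fromBlocks_transpose, fromBlocks_multiply, hY]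
    rw [fromBlocks_add]
    simp [fromBlocks_zero]
  · show fromBlocks 0 Y 0 0 * J (Fin g) _ * (fromBlocks 0 Y 0 0)ᵀ = 0
    simp [Matrix.J, fromBlocks_transpose, fromBlocks_multiply, fromBlocks_zero]
  · show fromBlocks 0 Y 0 0 * fromBlocks 0 Y 0 0 = 0
    simp [fromBlocks_multiply, fromBlocks_zero]

lemma genLower (hp : p.Prime) (h5 : 5 ≤ p) (hr : 1 ≤ r)
    (H : Subgroup ↥(Matrix.symplecticGroup (Fin g) (ZMod (p ^ (r + 1)))))
    (hH1 : Subgroup.map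
      (redSp g (ZMod.castHom (pow_dvd_pow p (Nat.le_succ r)) (ZMod (p ^ r)))) H = ⊤)
    (Z : Matrix (Fin g) (Fin g) (ZMod (p ^ (r + 1)))) (hZ : Zᵀ = Z) :
    InH H (1 + ((p ^ r : ℕ) : ZMod (p ^ (r + 1))) • fromBlocks 0 0 Z 0) := by
  apply gen1 hp h5 _ ((p ^ (r - 1) : ℕ) : ZMod (p ^ (r + 1))) (eps_mul_eps hr) p_mul_eps
    (p_mul_m hr) _ (hker1 hp.pos.ne') H hH1
  · show fromBlocks 0 0 Z 0 * J (Fin g) _ + J (Fin g) _ * (fromBlocks 0 0 Z 0)ᵀ = 0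
    simp only [Matrix.J, fromBlocks_transpose, fromBlocks_multiply, hZ]
    rw [fromBlocks_add]
    simp [fromBlocks_zero]
  · show fromBlocks 0 0 Z 0 * J (Fin g) _ * (fromBlocks 0 0 Z 0)ᵀ = 0
    simp [Matrix.J, fromBlocks_transpose, fromBlocks_multiply, fromBlocks_zero]
  · show fromBlocks 0 0 Z 0 * fromBlocks 0 0 Z 0 = 0
    simp [fromBlocks_multiply, fromBlocks_zero]

end Concrete

section Concrete2

variable {g p r : ℕ}

lemma singleConj (hp : p.Prime) (h5 : 5 ≤ p) (hr : 1 ≤ r) (hd : p ∣ p ^ (r + 1))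
    (H : Subgroup ↥(Matrix.symplecticGroup (Fin g) (ZMod (p ^ (r + 1)))))
    (hH1 : Subgroup.map
      (redSp g (ZMod.castHom (pow_dvd_pow p (Nat.le_succ r)) (ZMod (p ^ r)))) H = ⊤)
    (hsurj : Subgroup.map (redSp g (ZMod.castHom hd (ZMod p))) H = ⊤)
    (Y C : Matrix (Fin g) (Fin g) (ZMod (p ^ (r + 1)))) (hY : Yᵀ = Y) (hC : Cᵀ = C) :
    InH H (1 + ((p ^ r : ℕ) : ZMod (p ^ (r + 1))) • fromBlocks (-(Y * C)) 0 0 (C * Y)) := by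
  have hs : fromBlocks 1 0 C 1 ∈ symplecticGroup (Fin g) (ZMod (p ^ (r + 1))) := by
    rw [SymplecticGroup.mem_iff]
    simp only [Matrix.J, fromBlocks_transpose, fromBlocks_multiply, hC, transpose_one,
      transpose_zero, Matrix.mul_one, Matrix.one_mul, Matrix.mul_zero, Matrix.zero_mul,
      add_zero, zero_add, Matrix.mul_neg, Matrix.neg_mul]
    rw [fromBlocks_inj]
    refine ⟨by abel, by abel, by abel, by abel⟩
  have hss' : fromBlocks 1 0 C 1 * fromBlocks 1 0 (-C) 1
      = (1 : Matrix (Fin g ⊕ Fin g) (Fin g ⊕ Fin g) (ZMod (p ^ (r + 1)))) := by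
    rw [← fromBlocks_one]
    simp only [fromBlocks_multiply, Matrix.mul_one, Matrix.one_mul, Matrix.mul_zero,
      Matrix.zero_mul, add_zero, zero_add, Matrix.mul_neg]
    rw [fromBlocks_inj]
    refine ⟨by abel, by abel, by abel, by abel⟩
  have h1 := genUpper hp h5 hr H hH1 Y hY
  have h2 := conj_smul _ (ZMod.castHom hd (ZMod p)) (hker2 hp.pos.ne' hd) H hsurj _ _ hs hss'
    _ h1
  have hcomp : fromBlocks 1 0 C 1 * fromBlocks 0 Y 0 0 * fromBlocks 1 0 (-C) 1
      = fromBlocks (-(Y * C)) Y (-(C * Y * C)) (C * (Y : Matrix (Fin g) (Fin g) (ZMod (p ^ (r + 1))))) := by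
    simp only [fromBlocks_multiply, Matrix.mul_one, Matrix.one_mul, Matrix.mul_zero,
      Matrix.zero_mul, add_zero, zero_add, Matrix.mul_neg, Matrix.neg_mul]
    try rw [fromBlocks_inj]
    try refine ⟨by abel, by abel, by abel, by abel⟩
  rw [hcomp] at h2
  have h3 := genUpper hp h5 hr H hH1 (-Y) (by rw [transpose_neg, hY])
  have h4 := genLower hp h5 hr H hH1 (C * Y * C)
    (by rw [transpose_mul, transpose_mul, hC, hY, Matrix.mul_assoc])
  have h6 := (h2.mul h3).mul h4
  rw [one_add_smul_mul (eps_mul_eps hr), one_add_smul_mul (eps_mul_eps hr)] at h6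
  have hsum : fromBlocks (-(Y * C)) Y (-(C * Y * C)) (C * Y) + fromBlocks 0 (-Y) 0 0
      + fromBlocks 0 0 (C * Y * C) 0 = fromBlocks (-(Y * C)) 0 0 (C * Y) := by
    rw [fromBlocks_add, fromBlocks_add, fromBlocks_inj]
    refine ⟨by abel, by abel, by abel, by abel⟩
  rw [hsum] at h6
  exact h6

lemma predDiag (hp : p.Prime) (h5 : 5 ≤ p) (hr : 1 ≤ r) (hd : p ∣ p ^ (r + 1))
    (H : Subgroup ↥(Matrix.symplecticGroup (Fin g) (ZMod (p ^ (r + 1)))))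
    (hH1 : Subgroup.map
      (redSp g (ZMod.castHom (pow_dvd_pow p (Nat.le_succ r)) (ZMod (p ^ r)))) H = ⊤)
    (hsurj : Subgroup.map (redSp g (ZMod.castHom hd (ZMod p))) H = ⊤)
    (X : Matrix (Fin g) (Fin g) (ZMod (p ^ (r + 1)))) :
    InH H (1 + ((p ^ r : ℕ) : ZMod (p ^ (r + 1))) • fromBlocks X 0 0 (-Xᵀ)) := by
  set ε := ((p ^ r : ℕ) : ZMod (p ^ (r + 1))) with hε
  set P : Matrix (Fin g) (Fin g) (ZMod (p ^ (r + 1))) → Prop :=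
    fun X' => InH H (1 + ε • fromBlocks X' 0 0 (-X'ᵀ)) with hP
  -- closure under addition
  have hPadd : ∀ a b, P a → P b → P (a + b) := by
    intro a b ha hb
    have h2 := ha.mul hb
    rw [one_add_smul_mul (eps_mul_eps hr)] at h2
    have key : fromBlocks a 0 0 (-aᵀ) + fromBlocks b 0 0 (-bᵀ)
        = fromBlocks (a + b) 0 0 (-(a + b)ᵀ) := by
      rw [fromBlocks_add, fromBlocks_inj]
      exact ⟨rfl, by abel, by abel, by rw [transpose_add]; abel⟩
    rw [key] at h2
    exact h2
  have hP0 : P 0 := by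
    show InH H _
    rw [transpose_zero, neg_zero, fromBlocks_zero, smul_zero, add_zero]
    exact InH.one
  -- basis case
  have hbasis : ∀ (i j : Fin g) (x : ZMod (p ^ (r + 1))), P (Matrix.single i j x) := by
    intro i j x
    by_cases hij : j = i
    · subst hij
      have h1 := singleConj hp h5 hr hd H hH1 hsurj (Matrix.single j j 1)
        (Matrix.single j j (-x)) (std_transpose j j 1) (std_transpose j j (-x))
      have hyc : Matrix.single j j (1 : ZMod (p ^ (r + 1))) * Matrix.single j j (-x)
          = Matrix.single j j (-x) := by rw [Matrix.single_mul_single_same, one_mul]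
      have hcy : Matrix.single j j (-x) * Matrix.single j j (1 : ZMod (p ^ (r + 1)))
          = Matrix.single j j (-x) := by rw [Matrix.single_mul_single_same, mul_one]
      rw [hyc, hcy] at h1
      show InH H _
      have e1 : -Matrix.single j j (-x) = Matrix.single j j x := by
        ext a b; simp [Matrix.single]; split <;> simp
      have e2 : -(Matrix.single j j x)ᵀ = Matrix.single j j (-x) := by
        rw [std_transpose]; ext a b; simp [Matrix.single]; split <;> simp
      rw [e1] at h1
      rw [e2]
      exact h1
    · have h1 := singleConj hp h5 hr hd H hH1 hsurj (Matrix.single i i 1)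
        (Matrix.single i j (-x) + Matrix.single j i (-x)) (std_transpose i i 1)
        (by rw [transpose_add, std_transpose, std_transpose]; exact add_comm _ _)
      have hyc : Matrix.single i i (1 : ZMod (p ^ (r + 1)))
          * (Matrix.single i j (-x) + Matrix.single j i (-x)) = Matrix.single i j (-x) := by
        rw [Matrix.mul_add, Matrix.single_mul_single_same, Matrix.single_mul_single_of_ne (h := Ne.symm hij),
          one_mul, add_zero]
      have hcy : (Matrix.single i j (-x) + Matrix.single j i (-x))
          * Matrix.single i i (1 : ZMod (p ^ (r + 1))) = Matrix.single j i (-x) := by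
        rw [Matrix.add_mul, Matrix.single_mul_single_same, Matrix.single_mul_single_of_ne (h := hij),
          mul_one, zero_add]
      rw [hyc, hcy] at h1
      show InH H _
      have e1 : -Matrix.single i j (-x) = Matrix.single i j x := by
        ext a b; simp [Matrix.single]; split <;> simp
      have e2 : -(Matrix.single i j x)ᵀ = Matrix.single j i (-x) := by
        rw [std_transpose]; ext a b; simp [Matrix.single]; split <;> simp
      rw [e1] at h1
      rw [e2]
      exact h1
  have hsum : P (∑ i : Fin g, ∑ j : Fin g, Matrix.single i j (X i j)) := by
    refine Finset.sum_induction _ P hPadd hP0 ?_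
    intro i _
    exact Finset.sum_induction _ P hPadd hP0 (fun j _ => hbasis i j _)
  rwa [← matrix_eq_sum_single X] at hsum

end Concrete2

section Concrete3

variable {g p r : ℕ}

lemma kerSub (hp : p.Prime) (h5 : 5 ≤ p) (hr : 1 ≤ r) (hd : p ∣ p ^ (r + 1))
    (H : Subgroup ↥(Matrix.symplecticGroup (Fin g) (ZMod (p ^ (r + 1)))))
    (hH1 : Subgroup.map
      (redSp g (ZMod.castHom (pow_dvd_pow p (Nat.le_succ r)) (ZMod (p ^ r)))) H = ⊤)
    (hsurj : Subgroup.map (redSp g (ZMod.castHom hd (ZMod p))) H = ⊤)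
    (k : ↥(Matrix.symplecticGroup (Fin g) (ZMod (p ^ (r + 1)))))
    (hk : (↑k : Matrix (Fin g ⊕ Fin g) (Fin g ⊕ Fin g) (ZMod (p ^ (r + 1)))).map
      (ZMod.castHom (pow_dvd_pow p (Nat.le_succ r)) (ZMod (p ^ r))) = 1) : k ∈ H := by
  haveI : NeZero (p ^ (r + 1)) := ⟨pow_ne_zero _ hp.pos.ne'⟩
  set ε := ((p ^ r : ℕ) : ZMod (p ^ (r + 1))) with hεdef
  obtain ⟨A, hA⟩ := map_eq_one_extract' _ ε (hker1 hp.pos.ne') _ hk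
  have hsp0 : ε • (A * J (Fin g) (ZMod (p ^ (r + 1))) + J (Fin g) (ZMod (p ^ (r + 1))) * Aᵀ)
      = 0 := by
    have hm := k.2
    rw [SymplecticGroup.mem_iff] at hm
    rw [hA, sp_expand, eps_mul_eps hr, zero_smul, add_zero] at hm
    exact add_eq_left.mp hm
  set a := A.toBlocks₁₁ with hadef
  set b := A.toBlocks₁₂ with hbdef
  set c := A.toBlocks₂₁ with hcdef
  set d := A.toBlocks₂₂ with hddef
  have hAb : A = fromBlocks a b c d := (fromBlocks_toBlocks A).symm
  have hform : A * J (Fin g) (ZMod (p ^ (r + 1))) + J (Fin g) (ZMod (p ^ (r + 1))) * Aᵀ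
      = fromBlocks (b - bᵀ) (-(a + dᵀ)) (d + aᵀ) (cᵀ - c) := by
    rw [hAb]
    simp only [Matrix.J, fromBlocks_transpose, fromBlocks_multiply, Matrix.mul_one,
      Matrix.one_mul, Matrix.mul_zero, Matrix.zero_mul, add_zero, zero_add, Matrix.mul_neg,
      Matrix.neg_mul, fromBlocks_add]
    try rw [fromBlocks_inj]
    try refine ⟨by abel, by abel, by abel, by abel⟩
  rw [hform, fromBlocks_smul, ← fromBlocks_zero, fromBlocks_inj] at hsp0
  obtain ⟨h11, h12, h21, h22⟩ := hsp0
  have hb : ε • bᵀ = ε • b := by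
    rw [smul_sub, sub_eq_zero] at h11
    exact h11.symm
  have hc : ε • cᵀ = ε • c := by
    rw [smul_sub, sub_eq_zero] at h22
    exact h22
  have hdd : ε • d = ε • (-aᵀ) := by
    rw [smul_add, add_eq_zero_iff_eq_neg] at h21
    rw [h21, smul_neg]
  have h2u : IsUnit (2 : ZMod (p ^ (r + 1))) := by
    have h2n : IsUnit ((2 : ℕ) : ZMod (p ^ (r + 1))) := by
      rw [ZMod.isUnit_iff_coprime]
      exact Nat.Coprime.pow_right _ ((Nat.coprime_primes Nat.prime_two hp).mpr (by omega))
    rwa [Nat.cast_ofNat] at h2n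
  obtain ⟨t, ht1, ht2⟩ := isUnit_iff_exists.mp h2u
  set Y := t • (b + bᵀ) with hYdef
  set Z := t • (c + cᵀ) with hZdef
  have hYs : Yᵀ = Y := by
    rw [hYdef, transpose_smul, transpose_add, transpose_transpose, add_comm bᵀ b]
  have hZs : Zᵀ = Z := by
    rw [hZdef, transpose_smul, transpose_add, transpose_transpose, add_comm cᵀ c]
  have hεY : ε • Y = ε • b := by
    rw [hYdef, smul_comm, smul_add, hb, ← two_smul (ZMod (p ^ (r + 1))) (ε • b), smul_smul,
      ht2, one_smul]
  have hεZ : ε • Z = ε • c := by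
    rw [hZdef, smul_comm, smul_add, hc, ← two_smul (ZMod (p ^ (r + 1))) (ε • c), smul_smul,
      ht2, one_smul]
  have hεd : ε • (fromBlocks a b c d) = ε • (fromBlocks a 0 0 (-aᵀ)
      + fromBlocks 0 Y 0 0 + fromBlocks 0 0 Z 0) := by
    rw [fromBlocks_add, fromBlocks_add, fromBlocks_smul, fromBlocks_smul, fromBlocks_inj]
    refine ⟨by rw [add_zero, add_zero], ?_, ?_, ?_⟩
    · rw [zero_add, add_zero, hεY]
    · rw [zero_add, zero_add, hεZ]
    · rw [add_zero, add_zero, hdd]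
  have hkval : (↑k : Matrix (Fin g ⊕ Fin g) (Fin g ⊕ Fin g) (ZMod (p ^ (r + 1))))
      = (1 + ε • fromBlocks a 0 0 (-aᵀ)) * (1 + ε • fromBlocks 0 Y 0 0)
        * (1 + ε • fromBlocks 0 0 Z 0) := by
    rw [one_add_smul_mul (eps_mul_eps hr), one_add_smul_mul (eps_mul_eps hr), hA, hAb, hεd]
  have hInH : InH H (↑k : Matrix (Fin g ⊕ Fin g) (Fin g ⊕ Fin g) (ZMod (p ^ (r + 1)))) := by
    rw [hkval]
    exact ((predDiag hp h5 hr hd H hH1 hsurj a).mul (genUpper hp h5 hr H hH1 Y hYs)).mul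
      (genLower hp h5 hr H hH1 Z hZs)
  obtain ⟨x, hxH, hxv⟩ := hInH
  have hxk : x = k := Subtype.ext hxv
  rwa [← hxk]

end Concrete3

theorem aux_sp (g p : ℕ) (hp : p.Prime) (h5 : 5 ≤ p) :
    ∀ r : ℕ, 1 ≤ r →
      ∀ (H : Subgroup ↥(Matrix.symplecticGroup (Fin g) (ZMod (p ^ r)))) (hd : p ∣ p ^ r),
        Subgroup.map (redSp g (ZMod.castHom hd (ZMod p))) H = ⊤ → H = ⊤ := by
  intro r hr
  induction r, hr using Nat.le_induction with
  | base =>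
    intro H hd hsurj
    haveI : NeZero (p ^ 1) := ⟨pow_ne_zero _ hp.pos.ne'⟩
    have hinj : Function.Injective (ZMod.castHom hd (ZMod p)) := by
      rw [injective_iff_map_eq_zero]
      intro s hs
      obtain ⟨u, hu⟩ := cast_eq_zero_imp hd s hs
      have hp0 : (p : ZMod (p ^ 1)) = 0 := by
        have : ((p : ℕ) : ZMod (p ^ 1)) = ((p ^ 1 : ℕ) : ZMod (p ^ 1)) := by norm_num
        rw [this, ZMod.natCast_self]
      rw [hu, hp0, zero_mul]
    have hinj2 : Function.Injective (redSp g (ZMod.castHom hd (ZMod p))) := by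
      intro x y hxy
      apply Subtype.ext
      have h2 := congrArg Subtype.val hxy
      ext i j
      apply hinj
      have := congrFun (congrFun h2 i) j
      exact this
    apply Subgroup.map_injective hinj2
    rw [hsurj]
    exact le_antisymm (by rw [← hsurj]; exact Subgroup.map_mono le_top) le_top
  | succ r hr ih =>
    intro H hd hsurj
    have hd' : p ∣ p ^ r := dvd_pow_self p (by omega)
    have hcomp : (redSp g (ZMod.castHom hd' (ZMod p))).comp
        (redSp g (ZMod.castHom (pow_dvd_pow p (Nat.le_succ r)) (ZMod (p ^ r))))
        = redSp g (ZMod.castHom hd (ZMod p)) := by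
      have hring : (ZMod.castHom hd' (ZMod p)).comp
          (ZMod.castHom (pow_dvd_pow p (Nat.le_succ r)) (ZMod (p ^ r)))
          = ZMod.castHom hd (ZMod p) := ZMod.castHom_comp hd' _
      refine MonoidHom.ext fun x => Subtype.ext ?_
      show ((↑x : Matrix (Fin g ⊕ Fin g) (Fin g ⊕ Fin g) (ZMod (p ^ (r + 1)))).map
          (ZMod.castHom (pow_dvd_pow p (Nat.le_succ r)) (ZMod (p ^ r)))).map
          (ZMod.castHom hd' (ZMod p))
        = (↑x : Matrix (Fin g ⊕ Fin g) (Fin g ⊕ Fin g) (ZMod (p ^ (r + 1)))).map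
          (ZMod.castHom hd (ZMod p))
      rw [Matrix.map_map, ← hring]
      rfl
    have hsurj0 := hsurj
    rw [← hcomp, ← Subgroup.map_map] at hsurj
    have hH1 := ih (Subgroup.map
      (redSp g (ZMod.castHom (pow_dvd_pow p (Nat.le_succ r)) (ZMod (p ^ r)))) H) hd' hsurj
    rw [Subgroup.eq_top_iff']
    intro x
    have hx : redSp g (ZMod.castHom (pow_dvd_pow p (Nat.le_succ r)) (ZMod (p ^ r))) x
        ∈ Subgroup.map
          (redSp g (ZMod.castHom (pow_dvd_pow p (Nat.le_succ r)) (ZMod (p ^ r)))) H := by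
      rw [hH1]; trivial
    obtain ⟨h, hhH, hred⟩ := hx
    have hk : ((↑(h⁻¹ * x) : Matrix (Fin g ⊕ Fin g) (Fin g ⊕ Fin g)
        (ZMod (p ^ (r + 1))))).map
        (ZMod.castHom (pow_dvd_pow p (Nat.le_succ r)) (ZMod (p ^ r))) = 1 := by
      have h1 : redSp g (ZMod.castHom (pow_dvd_pow p (Nat.le_succ r)) (ZMod (p ^ r)))
          (h⁻¹ * x) = 1 := by
        rw [_root_.map_mul, map_inv, hred, inv_mul_cancel]
      exact congrArg Subtype.val h1
    have hkH := kerSub hp h5 hr hd H hH1 hsurj0 (h⁻¹ * x) hk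
    have hxx : h * (h⁻¹ * x) = x := by rw [← mul_assoc, mul_inv_cancel, one_mul]
    rw [← hxx]
    exact mul_mem hhH hkH


/-- Symplectic analogue of Serre's lifting lemma: a subgroup of `Sp_{2g}(ℤ/pʳℤ)`
surjecting onto `Sp_{2g}(ℤ/pℤ)` under reduction mod `p` is everything. -/
theorem stmt_17 (g p r : ℕ) (hp : p.Prime) (h5 : 5 ≤ p) (hr : 1 ≤ r)
    (H : Subgroup ↥(Matrix.symplecticGroup (Fin g) (ZMod (p ^ r))))
    (hsurj : Subgroup.map
      (redSp g (ZMod.castHom (dvd_pow_self p (Nat.one_le_iff_ne_zero.mp hr)) (ZMod p))) H = ⊤) :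
    H = ⊤ :=
  aux_sp g p hp h5 r hr H _ hsurj
end
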